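/- Let C = {i_1 < i_2 < ... < i_p} be a finite ordered set of p colors (p ≥ 2). Define the boundary operator d_p on the free abelian group generated by p-colored bubbles by d_p(B^C) = Σ_{q=1}^{p} (-1)^{q+1} Σ_{B' a (p-1)-bubble with color set C \ {i_q} contained in B^C} B'. Then d_{p-1} ∘ d_p = 0. -/

import Mathlib

open scoped Classical

/-- A closed colored graph with `n+1` colors: a finite multigraph in which every
vertex is incident to exactly one edge of each color in `Fin (n+1)`, and no edge
is a loop. Edges carry an orientation via the ordered pair `ends`. -/
structure ColoredGraph (n : ℕ) where
  V : Type
  E : Type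
  [fV : Fintype V]
  [fE : Fintype E]
  ends : E → V × V
  color : E → Fin (n + 1)
  no_loop : ∀ e, (ends e).1 ≠ (ends e).2
  unique_edge : ∀ (v : V) (i : Fin (n + 1)),
    ∃! e, color e = i ∧ ((ends e).1 = v ∨ (ends e).2 = v)

namespace ColoredGraph

attribute [instance] fV fE

variable {n : ℕ} (G : ColoredGraph n)

/-- Adjacency through an edge whose color lies in `C`. -/
def rel (C : Finset (Fin (n + 1))) (v w : G.V) : Prop :=
  ∃ e, G.color e ∈ C ∧
    (((G.ends e).1 = v ∧ (G.ends e).2 = w) ∨ ((G.ends e).1 = w ∧ (G.ends e).2 = v))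

/-- `S` is the vertex set of a connected component of the subgraph of `G`
consisting of all edges with colors in `C` (a bubble with color set `C`). -/
def IsBubble (C : Finset (Fin (n + 1))) (S : Finset G.V) : Prop :=
  ∃ v, ∀ w, w ∈ S ↔ Relation.ReflTransGen (G.rel C) v w

/-- The bubbles of `G` with exactly `p` colors. -/
def Bubble (p : ℕ) :=
  {x : Finset (Fin (n + 1)) × Finset G.V // x.1.card = p ∧ G.IsBubble x.1 x.2}

noncomputable instance (p : ℕ) : Fintype (G.Bubble p) := by
  unfold Bubble; exact Fintype.ofFinite _

/-- The sign `(-1)^{q+1}` where `q` is the position (starting from 1) of the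
color `i` in the ordered set `C`. -/
def sign (C : Finset (Fin (n + 1))) (i : Fin (n + 1)) : ℤ :=
  (-1) ^ ((C.filter (fun j => j < i)).card)

/-- The bubble `B'` is contained in the bubble `B`. -/
def Contains (B B' : Finset (Fin (n + 1)) × Finset G.V) : Prop :=
  B'.1 ⊆ B.1 ∧ B'.2 ⊆ B.2

/-- The `p`-th boundary operator: it sends a `p`-bubble `B` to the alternating
sum of the `(p-1)`-bubbles contained in it, the `(p-1)`-bubble with color set
`C \ {i_q}` carrying the sign `(-1)^{q+1}`. -/
noncomputable def boundary (p : ℕ) :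
    (G.Bubble p → ℤ) →ₗ[ℤ] (G.Bubble (p - 1) → ℤ) where
  toFun f := fun B' => ∑ B : G.Bubble p, (∑ i ∈ B.1.1,
      if B'.1.1 = B.1.1.erase i ∧ B'.1.2 ⊆ B.1.2 then sign B.1.1 i else 0) * f B
  map_add' f g := by
    funext B'
    simp [mul_add, Finset.sum_add_distrib]
  map_smul' c f := by
    funext B'
    simp [Finset.mul_sum, mul_left_comm]

lemma rel_symm (C : Finset (Fin (n + 1))) : Symmetric (G.rel C) := by
  rintro v w ⟨e, hc, h⟩
  exact ⟨e, hc, h.symm⟩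

/-- The connected component of `v` in the `C`-colored subgraph. -/
noncomputable def comp (C : Finset (Fin (n + 1))) (v : G.V) : Finset G.V :=
  Finset.univ.filter (fun w => Relation.ReflTransGen (G.rel C) v w)

lemma mem_comp {C : Finset (Fin (n + 1))} {v w : G.V} :
    w ∈ G.comp C v ↔ Relation.ReflTransGen (G.rel C) v w := by
  simp [comp]

lemma isBubble_comp (C : Finset (Fin (n + 1))) (v : G.V) :
    G.IsBubble C (G.comp C v) :=
  ⟨v, fun _ => G.mem_comp⟩

lemma self_mem_comp (C : Finset (Fin (n + 1))) (v : G.V) : v ∈ G.comp C v :=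
  G.mem_comp.2 .refl

lemma bubble_eq_comp {C : Finset (Fin (n + 1))} {S : Finset G.V}
    (h : G.IsBubble C S) {w : G.V} (hw : w ∈ S) : S = G.comp C w := by
  obtain ⟨v, hv⟩ := h
  have hvw : Relation.ReflTransGen (G.rel C) v w := (hv w).1 hw
  ext x
  rw [hv x, G.mem_comp]
  constructor
  · intro hx
    exact ((@Relation.ReflTransGen.symmetric _ _ ⟨G.rel_symm C⟩).symm _ _ hvw).trans hx
  · intro hx
    exact hvw.trans hx

lemma comp_mono {C C' : Finset (Fin (n + 1))} (h : C' ⊆ C) (v : G.V) :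
    G.comp C' v ⊆ G.comp C v := by
  intro w hw
  rw [G.mem_comp] at hw ⊢
  exact Relation.ReflTransGen.mono (fun a b ⟨e, he, h2⟩ => ⟨e, h he, h2⟩) _ _ hw

lemma base_mem {C : Finset (Fin (n + 1))} {S : Finset G.V} (h : G.IsBubble C S) :
    ∃ v, v ∈ S := by
  obtain ⟨v, hv⟩ := h
  exact ⟨v, (hv v).2 .refl⟩

lemma sign_anticomm {C : Finset (Fin (n + 1))} {i j : Fin (n + 1)}
    (hi : i ∈ C) (hj : j ∈ C) (hij : i ≠ j) :
    sign (C.erase j) i * sign C j + sign (C.erase i) j * sign C i = 0 := by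
  wlog h : i < j generalizing i j
  · rw [add_comm]
    exact this hj hi hij.symm ((hij.lt_or_gt).resolve_left h)
  have h1 : (C.erase j).filter (fun k => k < i) = C.filter (fun k => k < i) := by
    ext k
    simp only [Finset.mem_filter, Finset.mem_erase]
    constructor
    · rintro ⟨⟨_, hk⟩, hlt⟩; exact ⟨hk, hlt⟩
    · rintro ⟨hk, hlt⟩
      exact ⟨⟨fun hkj => absurd (hkj ▸ hlt) (not_lt.2 h.le), hk⟩, hlt⟩
  have h2 : (C.erase i).filter (fun k => k < j) = (C.filter (fun k => k < j)).erase i := by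
    ext k
    simp only [Finset.mem_filter, Finset.mem_erase]
    tauto
  have hi' : i ∈ C.filter (fun k => k < j) := Finset.mem_filter.2 ⟨hi, h⟩
  unfold sign
  rw [h1, h2, Finset.card_erase_of_mem hi']
  obtain ⟨m, hm⟩ : ∃ m, (C.filter (fun k => k < j)).card = m + 1 :=
    ⟨_, (Nat.succ_pred_eq_of_pos (Finset.card_pos.2 ⟨i, hi'⟩)).symm⟩
  rw [hm]
  simp only [Nat.add_sub_cancel, pow_succ]
  ring

lemma sum_ite_unique {α : Type*} [Fintype α] (P : α → Prop) [DecidablePred P]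
    [Decidable (∃ a, P a)] (c : ℤ)
    (hu : ∀ a b, P a → P b → a = b) :
    (∑ a : α, if P a then c else 0) = if ∃ a, P a then c else 0 := by
  by_cases h : ∃ a, P a
  · obtain ⟨a, ha⟩ := h
    rw [if_pos ⟨a, ha⟩, Finset.sum_eq_single a]
    · rw [if_pos ha]
    · intro b _ hb
      rw [if_neg (fun hPb => hb (hu b a hPb ha))]
    · intro ha'
      exact absurd (Finset.mem_univ a) ha'
  · rw [if_neg h]
    exact Finset.sum_eq_zero fun a _ => if_neg (fun hPa => h ⟨a, hPa⟩)

lemma middle_unique {p : ℕ} (B : G.Bubble p) (B'' : G.Bubble (p - 1 - 1))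
    (i j : Fin (n + 1)) (B₁ B₂ : G.Bubble (p - 1))
    (h1 : B''.1.1 = B₁.1.1.erase i ∧ B''.1.2 ⊆ B₁.1.2 ∧
      B₁.1.1 = B.1.1.erase j ∧ B₁.1.2 ⊆ B.1.2)
    (h2 : B''.1.1 = B₂.1.1.erase i ∧ B''.1.2 ⊆ B₂.1.2 ∧
      B₂.1.1 = B.1.1.erase j ∧ B₂.1.2 ⊆ B.1.2) : B₁ = B₂ := by
  obtain ⟨v, hv⟩ := G.base_mem B''.2.2
  apply Subtype.ext
  apply Prod.ext
  · rw [h1.2.2.1, h2.2.2.1]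
  · rw [G.bubble_eq_comp B₁.2.2 (h1.2.1 hv), G.bubble_eq_comp B₂.2.2 (h2.2.1 hv),
      h1.2.2.1, h2.2.2.1]

lemma middle_exists {p : ℕ} (B : G.Bubble p) (B'' : G.Bubble (p - 1 - 1))
    {i j : Fin (n + 1)} (hj : j ∈ B.1.1)
    (hcol : B''.1.1 = (B.1.1.erase j).erase i) (hsub : B''.1.2 ⊆ B.1.2) :
    ∃ B' : G.Bubble (p - 1), B''.1.1 = B'.1.1.erase i ∧ B''.1.2 ⊆ B'.1.2 ∧
      B'.1.1 = B.1.1.erase j ∧ B'.1.2 ⊆ B.1.2 := by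
  obtain ⟨v, hv⟩ := G.base_mem B''.2.2
  have hcard : (B.1.1.erase j).card = p - 1 := by
    rw [Finset.card_erase_of_mem hj, B.2.1]
  refine ⟨⟨(B.1.1.erase j, G.comp (B.1.1.erase j) v), hcard, G.isBubble_comp _ v⟩,
    hcol, ?_, rfl, ?_⟩
  · rw [G.bubble_eq_comp B''.2.2 hv]
    apply G.comp_mono
    rw [hcol]
    exact Finset.erase_subset _ _
  · rw [G.bubble_eq_comp B.2.2 (hsub hv)]
    exact G.comp_mono (Finset.erase_subset _ _) v

lemma antisym_sum {α : Type*} [DecidableEq α] (C : Finset α) (F : α → α → ℤ)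
    (h : ∀ i ∈ C, ∀ j ∈ C, i ≠ j → F i j + F j i = 0) :
    ∑ j ∈ C, ∑ i ∈ C.erase j, F i j = 0 := by
  have swap : (∑ j ∈ C, ∑ i ∈ C.erase j, F i j) = ∑ i ∈ C, ∑ j ∈ C.erase i, F i j := by
    refine Finset.sum_comm' ?_
    intro x y
    simp only [Finset.mem_erase]
    tauto
  have combined : (∑ j ∈ C, ∑ i ∈ C.erase j, F i j) +
      (∑ j ∈ C, ∑ i ∈ C.erase j, F j i) = 0 := by
    rw [← Finset.sum_add_distrib]
    refine Finset.sum_eq_zero fun j hj => ?_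
    rw [← Finset.sum_add_distrib]
    refine Finset.sum_eq_zero fun i hi => ?_
    exact h i (Finset.mem_of_mem_erase hi) j hj (Finset.mem_erase.1 hi).1
  linarith [combined, swap]

end ColoredGraph

open ColoredGraph in

/-- the composition of two consecutive boundary operators of the
bubble complex of a colored graph vanishes: `d_{p-1} ∘ d_p = 0` for `p ≥ 2`. -/
theorem boundary_comp_boundary (n : ℕ) (G : ColoredGraph n) (p : ℕ) (hp : 2 ≤ p) :
    (G.boundary (p - 1)).comp (G.boundary p) = 0 := by
  apply LinearMap.ext
  intro f
  funext B''
  simp only [LinearMap.comp_apply, LinearMap.zero_apply, Pi.zero_apply, boundary,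
    LinearMap.coe_mk, AddHom.coe_mk]
  suffices h : ∀ B : G.Bubble p,
      (∑ B' : G.Bubble (p - 1),
        (∑ i ∈ B'.1.1, if B''.1.1 = B'.1.1.erase i ∧ B''.1.2 ⊆ B'.1.2 then sign B'.1.1 i else 0) *
        (∑ j ∈ B.1.1, if B'.1.1 = B.1.1.erase j ∧ B'.1.2 ⊆ B.1.2 then sign B.1.1 j else 0)) = 0 by
    have expand : ∀ B' : G.Bubble (p - 1),
        (∑ i ∈ B'.1.1, if B''.1.1 = B'.1.1.erase i ∧ B''.1.2 ⊆ B'.1.2 then sign B'.1.1 i else 0) *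
        (∑ B : G.Bubble p,
          (∑ j ∈ B.1.1, if B'.1.1 = B.1.1.erase j ∧ B'.1.2 ⊆ B.1.2 then sign B.1.1 j else 0) * f B)
        = ∑ B : G.Bubble p,
          ((∑ i ∈ B'.1.1, if B''.1.1 = B'.1.1.erase i ∧ B''.1.2 ⊆ B'.1.2 then sign B'.1.1 i else 0) *
           (∑ j ∈ B.1.1, if B'.1.1 = B.1.1.erase j ∧ B'.1.2 ⊆ B.1.2 then sign B.1.1 j else 0)) * f B := by
      intro B'
      rw [Finset.mul_sum]
      exact Finset.sum_congr rfl fun B _ => by ring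
    rw [Finset.sum_congr rfl fun B' _ => expand B', Finset.sum_comm]
    refine Finset.sum_eq_zero fun B _ => ?_
    rw [← Finset.sum_mul, h B, zero_mul]
  intro B
  have stepA : ∀ B' : G.Bubble (p - 1),
      (∑ i ∈ B'.1.1, if B''.1.1 = B'.1.1.erase i ∧ B''.1.2 ⊆ B'.1.2 then sign B'.1.1 i else 0) *
      (∑ j ∈ B.1.1, if B'.1.1 = B.1.1.erase j ∧ B'.1.2 ⊆ B.1.2 then sign B.1.1 j else 0)
      = ∑ j ∈ B.1.1, ∑ i ∈ B.1.1.erase j,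
          (if B''.1.1 = B'.1.1.erase i ∧ B''.1.2 ⊆ B'.1.2 then sign B'.1.1 i else 0) *
          (if B'.1.1 = B.1.1.erase j ∧ B'.1.2 ⊆ B.1.2 then sign B.1.1 j else 0) := by
    intro B'
    rw [Finset.sum_mul_sum, Finset.sum_comm]
    refine Finset.sum_congr rfl fun j hj => ?_
    by_cases hc : B'.1.1 = B.1.1.erase j ∧ B'.1.2 ⊆ B.1.2
    · rw [hc.1]
    · simp only [if_neg hc, mul_zero, Finset.sum_const_zero]
  rw [Finset.sum_congr rfl fun B' _ => stepA B', Finset.sum_comm]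
  have stepC : ∀ j ∈ B.1.1, (∑ B' : G.Bubble (p - 1), ∑ i ∈ B.1.1.erase j,
      (if B''.1.1 = B'.1.1.erase i ∧ B''.1.2 ⊆ B'.1.2 then sign B'.1.1 i else 0) *
      (if B'.1.1 = B.1.1.erase j ∧ B'.1.2 ⊆ B.1.2 then sign B.1.1 j else 0))
      = ∑ i ∈ B.1.1.erase j,
          (if B''.1.1 = (B.1.1.erase j).erase i ∧ B''.1.2 ⊆ B.1.2
            then sign (B.1.1.erase j) i * sign B.1.1 j else 0) := by
    intro j hj
    rw [Finset.sum_comm]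
    refine Finset.sum_congr rfl fun i hi => ?_
    have hterm : ∀ B' : G.Bubble (p - 1),
        (if B''.1.1 = B'.1.1.erase i ∧ B''.1.2 ⊆ B'.1.2 then sign B'.1.1 i else 0) *
        (if B'.1.1 = B.1.1.erase j ∧ B'.1.2 ⊆ B.1.2 then sign B.1.1 j else 0)
        = if (B''.1.1 = B'.1.1.erase i ∧ B''.1.2 ⊆ B'.1.2 ∧
              B'.1.1 = B.1.1.erase j ∧ B'.1.2 ⊆ B.1.2)
            then sign (B.1.1.erase j) i * sign B.1.1 j else 0 := by
      intro B'
      by_cases h1 : B''.1.1 = B'.1.1.erase i ∧ B''.1.2 ⊆ B'.1.2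
      · by_cases h2 : B'.1.1 = B.1.1.erase j ∧ B'.1.2 ⊆ B.1.2
        · rw [if_pos h1, if_pos h2, if_pos ⟨h1.1, h1.2, h2⟩, ← h2.1]
        · rw [if_neg h2, mul_zero, if_neg (by tauto)]
      · rw [if_neg h1, zero_mul, if_neg (by tauto)]
    rw [Finset.sum_congr rfl fun B' _ => hterm B']
    refine (sum_ite_unique (fun B' : G.Bubble (p - 1) =>
        B''.1.1 = B'.1.1.erase i ∧ B''.1.2 ⊆ B'.1.2 ∧
        B'.1.1 = B.1.1.erase j ∧ B'.1.2 ⊆ B.1.2)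
      (sign (B.1.1.erase j) i * sign B.1.1 j)
      (fun a b ha hb => G.middle_unique B B'' i j a b ha hb)).trans ?_
    refine if_congr ?_ rfl rfl
    constructor
    · rintro ⟨B', hP⟩
      refine ⟨?_, hP.2.1.trans hP.2.2.2⟩
      rw [hP.1, hP.2.2.1]
    · rintro ⟨hc1, hc2⟩
      exact G.middle_exists B B'' hj hc1 hc2
  rw [Finset.sum_congr rfl stepC]
  refine antisym_sum B.1.1 _ fun i hi j hj hij => ?_
  have herase : (B.1.1.erase j).erase i = (B.1.1.erase i).erase j := by
    ext k
    simp only [Finset.mem_erase]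
    tauto
  by_cases hc : B''.1.1 = (B.1.1.erase j).erase i ∧ B''.1.2 ⊆ B.1.2
  · rw [if_pos hc, if_pos ⟨herase ▸ hc.1, hc.2⟩]
    exact sign_anticomm hi hj hij
  · rw [if_neg hc, if_neg (fun hc' => hc ⟨herase ▸ hc'.1, hc'.2⟩), add_zero]
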